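/- Let P be an F-program, X a stable model of P, I and J two-valued interpretations with I ⊆ X ⊆ J. Then for every rule r ∈ P not in the simplification P^{I,J} = {r ∈ P : J ⊨ body(r)^{I,+}}, X does not satisfy body(r); consequently X is a stable model of P if and only if X is a stable model of P^{I,J}. -/

import Mathlib

inductive Formula (α : Type) : Type 1
  | atom : α → Formula α
  | conj : {ι : Type} → (ι → Formula α) → Formula α
  | disj : {ι : Type} → (ι → Formula α) → Formula α
  | impl : Formula α → Formula α → Formula α

namespace Formula

def fbot {α : Type} : Formula α := .disj (fun i : Empty => i.elim)
def ftop {α : Type} : Formula α := .conj (fun i : Empty => i.elim)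

def Sat {α : Type} (I : Set α) : Formula α → Prop
  | .atom a => a ∈ I
  | .conj f => ∀ i, Sat I (f i)
  | .disj f => ∃ i, Sat I (f i)
  | .impl F G => Sat I F → Sat I G

open Classical in
noncomputable def reduct {α : Type} (I : Set α) : Bool → Formula α → Formula α
  | true, .atom a => .atom a
  | false, .atom a => if a ∈ I then ftop else fbot
  | pol, .conj f => .conj (fun i => reduct I pol (f i))
  | pol, .disj f => .disj (fun i => reduct I pol (f i))
  | true, .impl F G => .impl (reduct I false F) (reduct I true G)
  | false, .impl F G => .impl (reduct I true F) (reduct I false G)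

def atomsPol {α : Type} : Bool → Formula α → Set α
  | true, .atom a => {a}
  | false, .atom _ => ∅
  | pol, .conj f => ⋃ i, atomsPol pol (f i)
  | pol, .disj f => ⋃ i, atomsPol pol (f i)
  | pol, .impl F G => atomsPol (!pol) F ∪ atomsPol pol G

def Positive {α : Type} (F : Formula α) : Prop := atomsPol false F = ∅

open Classical in
noncomputable def freduct {α : Type} (X : Set α) : Formula α → Formula α
  | .atom a => if a ∈ X then .atom a else fbot
  | .conj f => if Sat X (.conj f) then .conj (fun i => freduct X (f i)) else fbot
  | .disj f => if Sat X (.disj f) then .disj (fun i => freduct X (f i)) else fbot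
  | .impl F G => if Sat X (.impl F G) then .impl (freduct X F) (freduct X G) else fbot

def noImpl {α : Type} : Formula α → Prop
  | .atom _ => True
  | .conj f => ∀ i, noImpl (f i)
  | .disj f => ∀ i, noImpl (f i)
  | .impl _ _ => False

def inR {α : Type} : Formula α → Prop
  | .atom _ => True
  | .conj f => ∀ i, inR (f i)
  | .disj f => ∀ i, inR (f i)
  | .impl F G => noImpl F ∧ inR G

end Formula

open Formula

structure Rule (α : Type) : Type 1 where
  head : α
  body : Formula α

abbrev Program (α : Type) := Set (Rule α)

def Tstep {α : Type} (P : Program α) (X : Set α) : Set α :=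
  {a | ∃ r ∈ P, r.head = a ∧ Sat X r.body}

noncomputable def progReduct {α : Type} (P : Program α) (I : Set α) : Program α :=
  (fun r => ⟨r.head, reduct I true r.body⟩) '' P

noncomputable def stableOp {α : Type} (P : Program α) (I : Set α) : Set α :=
  ⋂₀ {X | Tstep (progReduct P I) X ⊆ X}

def precLe {α : Type} (p q : Set α × Set α) : Prop := p.1 ⊆ q.1 ∧ q.2 ⊆ p.2

noncomputable def wfOp {α : Type} (P : Program α) (p : Set α × Set α) : Set α × Set α :=
  (stableOp P p.2, stableOp P p.1)

noncomputable def IsWFModel {α : Type} (P : Program α) (p : Set α × Set α) : Prop :=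
  wfOp P p = p ∧ ∀ q, wfOp P q = q → precLe p q

def IsModel {α : Type} (P : Program α) (X : Set α) : Prop :=
  ∀ r ∈ P, Sat X r.body → r.head ∈ X

noncomputable def freductProg {α : Type} (P : Program α) (X : Set α) : Program α :=
  (fun r => ⟨r.head, freduct X r.body⟩) '' P

noncomputable def StableModel {α : Type} (P : Program α) (X : Set α) : Prop :=
  IsModel (freductProg P X) X ∧ ∀ Y, IsModel (freductProg P X) Y → Y ⊆ X → Y = X

noncomputable def simpProg {α : Type} (P : Program α) (I J : Set α) : Program α :=
  {r | r ∈ P ∧ Sat J (reduct I true r.body)}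

noncomputable def relStable {α : Type} (P : Program α) (Ir J : Set α) : Set α :=
  ⋂₀ {X | Tstep (progReduct P J) (Ir ∪ X) ⊆ X}

noncomputable def relWF {α : Type} (P : Program α) (r p : Set α × Set α) : Set α × Set α :=
  (relStable P r.1 (p.2 ∪ r.2), relStable P r.2 (p.1 ∪ r.1))

/-!
Evaluating the ID-reduct `reduct I true F` in `J` reads positive atoms in `J ⊇ X` and negative
atoms in `I ⊆ X`, so it can only be easier to satisfy than `F` in `X`. Hence every rule dropped
by the simplification has a body false in `X`, its body in the reduct `P^X` is `⊥`, and `P^X`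
and `(P^{I,J})^X` have the same models.
-/

namespace Formula

variable {α : Type}

theorem not_sat_fbot (Y : Set α) : ¬ Sat Y (fbot : Formula α) :=
  fun ⟨i, _⟩ => i.elim

theorem sat_reduct_of_subset {I X J : Set α} (hIX : I ⊆ X) (hXJ : X ⊆ J) (F : Formula α) :
    (Sat X F → Sat J (reduct I true F)) ∧ (Sat J (reduct I false F) → Sat X F) := by
  induction F with
  | atom a =>
    refine ⟨fun h => hXJ h, fun h => ?_⟩
    by_cases ha : a ∈ I
    · exact hIX ha
    · simp only [reduct, if_neg ha] at h
      exact (not_sat_fbot J h).elim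
  | conj f ih => exact ⟨fun h i => (ih i).1 (h i), fun h i => (ih i).2 (h i)⟩
  | disj f ih => exact ⟨fun ⟨i, h⟩ => ⟨i, (ih i).1 h⟩, fun ⟨i, h⟩ => ⟨i, (ih i).2 h⟩⟩
  | impl F G ihF ihG =>
    exact ⟨fun h hF => ihG.1 (h (ihF.2 hF)), fun h hF => ihG.2 (h (ihF.1 hF))⟩

theorem freduct_of_not_sat {X : Set α} {F : Formula α} (h : ¬ Sat X F) : freduct X F = fbot := by
  cases F <;> exact if_neg h

end Formula

section Simplification

variable {α : Type} {P : Program α} {X I J : Set α}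

theorem not_sat_body_of_not_mem_simpProg (hIX : I ⊆ X) (hXJ : X ⊆ J) {r : Rule α} (hr : r ∈ P)
    (hrs : r ∉ simpProg P I J) : ¬ Sat X r.body :=
  fun hsat => hrs ⟨hr, (sat_reduct_of_subset hIX hXJ r.body).1 hsat⟩

theorem isModel_freductProg_simpProg_iff (hIX : I ⊆ X) (hXJ : X ⊆ J) (Y : Set α) :
    IsModel (freductProg (simpProg P I J) X) Y ↔ IsModel (freductProg P X) Y := by
  constructor
  · rintro h _ ⟨r, hr, rfl⟩ hsat
    by_cases hrs : r ∈ simpProg P I J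
    · exact h _ ⟨r, hrs, rfl⟩ hsat
    · have hbot := freduct_of_not_sat (not_sat_body_of_not_mem_simpProg hIX hXJ hr hrs)
      exact (not_sat_fbot Y (hbot ▸ hsat)).elim
  · rintro h _ ⟨r, hr, rfl⟩
    exact h _ ⟨r, hr.1, rfl⟩

end Simplification

theorem stableModel_congr {α : Type} {P Q : Program α} {X : Set α}
    (h : ∀ Y, IsModel (freductProg P X) Y ↔ IsModel (freductProg Q X) Y) :
    StableModel P X ↔ StableModel Q X := by
  simp only [StableModel, h]

theorem stmt12_general {α : Type} (P : Program α) (X I J : Set α)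
    (hIX : I ⊆ X) (hXJ : X ⊆ J) :
    (∀ r ∈ P, r ∉ simpProg P I J → ¬ Sat X r.body) ∧
    (StableModel P X ↔ StableModel (simpProg P I J) X) :=
  ⟨fun _ hr hrs => not_sat_body_of_not_mem_simpProg hIX hXJ hr hrs,
    stableModel_congr fun Y => (isModel_freductProg_simpProg_iff hIX hXJ Y).symm⟩

/-- If `I ⊆ X ⊆ J` and `X` is a stable model of `P`, then every rule dropped by the
simplification `P^{I,J}` has its body falsified by `X`; consequently `X` is a stable
model of `P` iff it is one of `P^{I,J}`. -/
theorem stmt12 {α : Type} (P : Program α) (X I J : Set α)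
    (hX : StableModel P X) (hIX : I ⊆ X) (hXJ : X ⊆ J) :
    (∀ r ∈ P, r ∉ simpProg P I J → ¬ Sat X r.body) ∧
    (StableModel P X ↔ StableModel (simpProg P I J) X) :=
  stmt12_general P X I J hIX hXJ
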